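/- For any symmetric a, b : ℕ×ℕ → ℝ and any positive sequence (f_i), taking φ_i = ln(f_i/M_i) in the discrete weak formulation (with M_i satisfying the discrete detailed balance a_{l,i-l}·M_l·M_{i-l} = b_{l,i-l}·M_i), one obtains ∑_{i=0}^{N} Q_i·ln(f_i/M_i) = −(1/2)·∑_{i=0}^{N} ∑_{l=0}^{i} (a_{l,i-l}·f_l·f_{i-l} − b_{l,i-l}·f_i)·ln( (a_{l,i-l}·f_l·f_{i-l}) / (b_{l,i-l}·f_i) ). -/

import Mathlib

/-!
Write `D l i = a_{l,i-l} f_l f_{i-l} - b_{l,i-l} f_i` for the net rate of the reaction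
`l + (i - l) ⇌ i`. For every test sequence `φ`, exchanging the order of summation in the loss
term and using the symmetry `D (i - l) i = D l i` gives the discrete weak formulation
`∑ᵢ Qᵢ φᵢ = -½ ∑ᵢ ∑_{l ≤ i} D l i (φ_l + φ_{i-l} - φ_i)`. For `φᵢ = log (fᵢ / Mᵢ)` detailed
balance turns `φ_l + φ_{i-l} - φ_i` into `log (a f_l f_{i-l} / (b f_i))`.
-/

open Finset

theorem sum_range_succ_sum_range_succ_comm {β : Type*} [AddCommMonoid β] (N : ℕ)
    (g : ℕ → ℕ → β) :
    ∑ i ∈ range (N + 1), ∑ l ∈ range (i + 1), g i l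
      = ∑ l ∈ range (N + 1), ∑ i ∈ Icc l N, g i l :=
  sum_comm' fun i l => by simp only [mem_range, mem_Icc]; omega

theorem sum_range_succ_mul_reflect {R : Type*} [CommSemiring R] (i : ℕ) (D : ℕ → ℕ → R)
    (φ : ℕ → R) (hD : ∀ l, l ≤ i → D (i - l) i = D l i) :
    ∑ l ∈ range (i + 1), D l i * φ (i - l) = ∑ l ∈ range (i + 1), D l i * φ l := by
  rw [← sum_range_reflect (fun l => D l i * φ l)]
  refine sum_congr rfl fun l hl => ?_
  have hli : l ≤ i := Nat.lt_succ_iff.mp (mem_range.mp hl)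
  rw [Nat.add_sub_cancel, hD l hli]

theorem discrete_weak_formulation {K : Type*} [Field K] [CharZero K] (N : ℕ)
    (D : ℕ → ℕ → K) (φ : ℕ → K) (hD : ∀ l i, l ≤ i → D (i - l) i = D l i) :
    ∑ i ∈ range (N + 1),
        ((1 / 2) * ∑ l ∈ range (i + 1), D l i - ∑ l ∈ Icc i N, D i l) * φ i
      = -(1 / 2) * ∑ i ∈ range (N + 1), ∑ l ∈ range (i + 1),
          D l i * (φ l + φ (i - l) - φ i) := by
  have loss : ∑ i ∈ range (N + 1), ∑ l ∈ range (i + 1), D l i * φ l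
      = ∑ i ∈ range (N + 1), (∑ l ∈ Icc i N, D i l) * φ i := by
    rw [sum_range_succ_sum_range_succ_comm N (fun i l => D l i * φ l)]
    simp only [sum_mul]
  have split : ∀ i, ∑ l ∈ range (i + 1), D l i * (φ l + φ (i - l) - φ i)
      = 2 * ∑ l ∈ range (i + 1), D l i * φ l - (∑ l ∈ range (i + 1), D l i) * φ i := by
    intro i
    simp only [mul_sub, mul_add, sum_sub_distrib, sum_add_distrib, ← sum_mul,
      sum_range_succ_mul_reflect i D φ (fun l => hD l i)]
    ring
  simp only [split, sum_sub_distrib, ← mul_sum, loss, sub_mul, mul_assoc]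
  ring

def netRate (a b : ℕ → ℕ → ℝ) (f : ℕ → ℝ) (l i : ℕ) : ℝ :=
  a l (i - l) * f l * f (i - l) - b l (i - l) * f i

theorem netRate_sub_self {a b : ℕ → ℕ → ℝ} (ha : ∀ i j, a i j = a j i)
    (hb : ∀ i j, b i j = b j i) (f : ℕ → ℝ) {l i : ℕ} (hli : l ≤ i) :
    netRate a b f (i - l) i = netRate a b f l i := by
  rw [netRate, netRate, Nat.sub_sub_self hli, ha (i - l) l, hb (i - l) l]
  ring

theorem Real.log_mul_mul_div_eq_of_detailed_balance {α β x y z X Y Z : ℝ} (hβ : β ≠ 0)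
    (hx : x ≠ 0) (hy : y ≠ 0) (hz : z ≠ 0) (hX : X ≠ 0) (hY : Y ≠ 0) (hZ : Z ≠ 0)
    (hdb : α * X * Y = β * Z) :
    Real.log (α * x * y / (β * z)) = Real.log (x / X) + Real.log (y / Y) - Real.log (z / Z) := by
  have hratio : α * x * y / (β * z) = x / X * (y / Y) / (z / Z) := by
    field_simp
    exact hdb
  rw [hratio, Real.log_div (by positivity) (by positivity), Real.log_mul (by positivity)
    (by positivity)]

theorem weak_formulation_entropy_general (N : ℕ) (a b : ℕ → ℕ → ℝ) (f M : ℕ → ℝ)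
    (ha : ∀ i j, a i j = a j i) (hb : ∀ i j, b i j = b j i)
    (hbpos : ∀ i j, 0 < b i j)
    (hf : ∀ i, 0 < f i) (hM : ∀ i, 0 < M i)
    (hdb : ∀ l i, l ≤ i → i ≤ N →
      a l (i - l) * M l * M (i - l) = b l (i - l) * M i) :
    ∑ i ∈ range (N + 1),
      ((1 / 2) * ∑ l ∈ range (i + 1),
          (a l (i - l) * f l * f (i - l) - b l (i - l) * f i)
        - ∑ l ∈ Icc i N, (a i (l - i) * f i * f (l - i) - b i (l - i) * f l))
        * Real.log (f i / M i)
    = -(1 / 2) * ∑ i ∈ range (N + 1), ∑ l ∈ range (i + 1),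
        (a l (i - l) * f l * f (i - l) - b l (i - l) * f i)
          * Real.log ((a l (i - l) * f l * f (i - l)) / (b l (i - l) * f i)) := by
  refine (discrete_weak_formulation N (netRate a b f) (fun i => Real.log (f i / M i))
    fun l i hli => netRate_sub_self ha hb f hli).trans ?_
  congr 1
  refine sum_congr rfl fun i hi => sum_congr rfl fun l hl => ?_
  have hiN : i ≤ N := Nat.lt_succ_iff.mp (mem_range.mp hi)
  have hli : l ≤ i := Nat.lt_succ_iff.mp (mem_range.mp hl)
  rw [Real.log_mul_mul_div_eq_of_detailed_balance (hbpos _ _).ne' (hf _).ne' (hf _).ne'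
    (hf _).ne' (hM _).ne' (hM _).ne' (hM _).ne' (hdb l i hli hiN)]
  rfl

theorem weak_formulation_entropy (N : ℕ) (a b : ℕ → ℕ → ℝ) (f M : ℕ → ℝ)
    (ha : ∀ i j, a i j = a j i) (hb : ∀ i j, b i j = b j i)
    (hapos : ∀ i j, 0 < a i j) (hbpos : ∀ i j, 0 < b i j)
    (hf : ∀ i, 0 < f i) (hM : ∀ i, 0 < M i)
    (hdb : ∀ l i, l ≤ i → i ≤ N →
      a l (i - l) * M l * M (i - l) = b l (i - l) * M i) :
    ∑ i ∈ range (N + 1),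
      ((1 / 2) * ∑ l ∈ range (i + 1),
          (a l (i - l) * f l * f (i - l) - b l (i - l) * f i)
        - ∑ l ∈ Icc i N, (a i (l - i) * f i * f (l - i) - b i (l - i) * f l))
        * Real.log (f i / M i)
    = -(1 / 2) * ∑ i ∈ range (N + 1), ∑ l ∈ range (i + 1),
        (a l (i - l) * f l * f (i - l) - b l (i - l) * f i)
          * Real.log ((a l (i - l) * f l * f (i - l)) / (b l (i - l) * f i)) :=
  weak_formulation_entropy_general N a b f M ha hb hbpos hf hM hdb
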